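/- Let κ be a measurable cardinal, U a non-principal κ-complete ultrafilter on κ, and j : V → M the ultrapower elementary embedding by U. Let W be a non-principal κ-complete ultrafilter on κ with ultrapower embedding j_W : V → M_W, and suppose U ◁ W, i.e. U ∈ M_W. Then there is an ordinal α < (2^κ)⁺ such that j_W(α) > α = j(α). -/

import Mathlib

open Cardinal Set

universe u

/-- An ideal of subsets of `ι`: a proper, downward closed family of subsets of `ι`
containing `∅` and closed under binary unions. -/
structure SetIdeal (ι : Type u) : Type u where
  sets : Set (Set ι)
  empty_mem : ∅ ∈ sets
  mem_of_subset : ∀ ⦃A B : Set ι⦄, A ⊆ B → B ∈ sets → A ∈ sets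
  union_mem : ∀ ⦃A B : Set ι⦄, A ∈ sets → B ∈ sets → A ∪ B ∈ sets
  univ_not_mem : Set.univ ∉ sets

instance {ι : Type u} : Membership (Set ι) (SetIdeal ι) :=
  ⟨fun J A => A ∈ J.sets⟩

/-- The ideal `J` is `κ`-complete: it is closed under unions of fewer than `κ` of
its members. -/
def SetIdeal.IsComplete {ι : Type u} (J : SetIdeal ι) (κ : Cardinal.{u}) : Prop :=
  ∀ S : Set (Set ι), #S < κ → (∀ A ∈ S, A ∈ J) → ⋃₀ S ∈ J

/-- `g < h` modulo the ideal `J` (the set where it fails belongs to `J`). -/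
def SetIdeal.ltMod {ι : Type u} (J : SetIdeal ι) (g h : ι → Ordinal.{0}) : Prop :=
  {i | h i ≤ g i} ∈ J

/-- `lam` is the true cofinality of the product `∏ i, f i` ordered by `<` modulo `J`:
`lam` is regular and there is a `<_J`-increasing sequence of length `lam` which is
cofinal in the product. -/
def IsTcf {ι : Type u} (J : SetIdeal ι) (f : ι → Ordinal.{0}) (lam : Cardinal.{0}) : Prop :=
  lam.IsRegular ∧
  ∃ F : lam.ord.ToType → ι → Ordinal.{0},
    (∀ β i, F β i < f i) ∧
    (∀ β γ, β < γ → J.ltMod (F β) (F γ)) ∧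
    ∀ g : ι → Ordinal.{0}, (∀ i, g i < f i) → ∃ β, J.ltMod g (F β)

/-- `lam` is the true cofinality of `∏ i, f i` modulo the ideal `J^bd` of bounded
subsets of `ι`. -/
def IsTcfBdd {ι : Type u} [Preorder ι] (f : ι → Ordinal.{0}) (lam : Cardinal.{0}) : Prop :=
  lam.IsRegular ∧
  ∃ F : lam.ord.ToType → ι → Ordinal.{0},
    (∀ β i, F β i < f i) ∧
    (∀ β γ, β < γ → BddAbove {i | F γ i ≤ F β i}) ∧
    ∀ g : ι → Ordinal.{0}, (∀ i, g i < f i) → ∃ β, BddAbove {i | F β i ≤ g i}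

/-- `pcf_{σ-complete}(𝔞)`: the set of true cofinalities of `∏ 𝔞` modulo `σ`-complete
ideals on `𝔞`. -/
def pcfCompl (σ : Cardinal.{0}) (𝔞 : Set Cardinal.{0}) : Set Cardinal.{0} :=
  { lam | ∃ J : SetIdeal ↥𝔞, J.IsComplete (Cardinal.lift.{1} σ) ∧
      IsTcf J (fun a => (a : Cardinal).ord) lam }

/-- `pcf(𝔞)`: the set of true cofinalities of `∏ 𝔞` modulo ideals on `𝔞`. -/
def pcfSet (𝔞 : Set Cardinal.{0}) : Set Cardinal.{0} :=
  { lam | ∃ J : SetIdeal ↥𝔞, IsTcf J (fun a => (a : Cardinal).ord) lam }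

/-- The set of cardinals realized as true cofinalities in the definition of
`pp_{Γ(κ)}(μ)`: true cofinalities of `∏ 𝔞 / J` where `𝔞` is a set of `κ` regular
cardinals unbounded in `μ` and `J` is a `κ`-complete ideal on `𝔞` extending the
ideal of bounded subsets of `𝔞`. -/
def ppSet (κ μ : Cardinal.{0}) : Set Cardinal.{0} :=
  { lam | ∃ 𝔞 : Set Cardinal.{0},
      (∀ a ∈ 𝔞, (a : Cardinal).IsRegular) ∧
      #↥𝔞 = Cardinal.lift.{1} κ ∧
      (∀ a ∈ 𝔞, a < μ) ∧
      (∀ b, b < μ → ∃ a ∈ 𝔞, b < a) ∧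
      ∃ J : SetIdeal ↥𝔞,
        J.IsComplete (Cardinal.lift.{1} κ) ∧
        (∀ A : Set ↥𝔞, BddAbove A → A ∈ J) ∧
        IsTcf J (fun a => (a : Cardinal).ord) lam }

/-- `pp_{Γ(κ)}(μ)`. -/
noncomputable def ppGamma (κ μ : Cardinal.{0}) : Cardinal.{0} := sSup (ppSet κ μ)

/-- `pp⁺_{Γ(κ)}(μ)`: the least regular cardinal which is not realized as one of the
true cofinalities in the definition of `pp_{Γ(κ)}(μ)`. -/
noncomputable def ppGammaPlus (κ μ : Cardinal.{0}) : Cardinal.{0} :=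
  sInf { lam | lam.IsRegular ∧ lam ∉ ppSet κ μ }

/-- The least singular cardinal `ξ ≤ τ` of cofinality `κ` above `2 ^ κ` such that
`pp_{Γ(κ)}(ξ) ≥ τ` (denoted `μ*`, resp. `τ*`, in the paper). -/
noncomputable def leastPP (κ τ : Cardinal.{0}) : Cardinal.{0} :=
  sInf { ξ | ξ ≤ τ ∧ 2 ^ κ < ξ ∧ ξ.ord.cof = κ ∧ τ ≤ ppGamma κ ξ }

/-- The ultrafilter `U` is `κ`-complete. -/
def UltraComplete {ι : Type} (U : Ultrafilter ι) (κ : Cardinal.{0}) : Prop :=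
  ∀ S : Set (Set ι), #S < κ → (∀ A ∈ S, A ∈ U) → ⋂₀ S ∈ U

/-- The ultrafilter `U` is non-principal. -/
def NonPrincipal {ι : Type} (U : Ultrafilter ι) : Prop :=
  ∀ i : ι, ({i} : Set ι) ∉ U

/-- `r` is the rank function of the (well-founded) ultrapower of the ordinals by `U`:
`r f` is the ordinal represented by `f` in the transitive collapse of `Ord ^ ι / U`.
Equivalently, `r` induces an order isomorphism from `Ord ^ ι / U` onto an initial
segment of the ordinals.  In particular `fun α => r (fun _ => α)` is the restriction
to the ordinals of the ultrapower embedding `j : V → M` by `U`. -/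
def IsUltrapowerRank {ι : Type} (U : Ultrafilter ι)
    (r : (ι → Ordinal.{0}) → Ordinal.{0}) : Prop :=
  (∀ f g : ι → Ordinal.{0}, (r f < r g ↔ {i | f i < g i} ∈ U)) ∧
  ∀ (f : ι → Ordinal.{0}) (β : Ordinal.{0}), β < r f → ∃ g, r g = β

/-- `κ` is weakly compact: uncountable and `κ → (κ)²₂`. -/
def IsWeaklyCompact (κ : Cardinal.{0}) : Prop :=
  ℵ₀ < κ ∧
  ∀ c : κ.ord.ToType → κ.ord.ToType → Bool,
    ∃ (H : Set κ.ord.ToType) (b : Bool), #↥H = κ ∧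
      ∀ x ∈ H, ∀ y ∈ H, x < y → c x y = b

/-- The ordinal corresponding to an element of the canonical type `κ.ord.toType`. -/
noncomputable def ordVal (κ : Cardinal.{0}) (x : κ.ord.ToType) : Ordinal.{0} :=
  ((Ordinal.ToType.mk (o := κ.ord)).symm x : Set.Iio κ.ord)

/-!
Let `j = j_U` and `α = sup_n jⁿ(κ)`. Countable completeness of `U` makes `j` continuous at
suprema of countable cofinality, so `j α = α`; and `|j ξ| ≤ |ξ|^κ` keeps `α` below `(2^κ)⁺`.
Since `j_W α ≥ j_W κ`, it remains to see `α < j_W κ`. Because `U ∈ M_W` and `M_W` contains all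
`κ`-sequences, `j β` may be computed in `M_W`, where `j_W κ` is inaccessible; so `j` maps `j_W κ`
into itself, and `j_W κ` has uncountable cofinality in `V`. The computation in `M_W` is
unfolded by Łoś's theorem: at `W`-almost every coordinate `i`, `F i` orders the functions from
`k i` to `b i + 1 < κ` (where `[b]_W = β`), these local ranks are below `κ` because `κ` is a strong
limit, and the rank of a function in the `U`-ultrapower is at most the `W`-class of its local ranks.
-/

open Filter Ordinal

theorem Cardinal.IsStrongLimit.power_lt {c a b : Cardinal} (hc : IsStrongLimit c) (ha : a < c)
    (hb : b < c) : a ^ b < c :=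
  calc a ^ b ≤ (2 ^ a) ^ b := power_le_power_right (cantor a).le
    _ = 2 ^ (a * b) := power_mul.symm
    _ < c := hc.isStrongPrelimit (mul_lt_of_lt hc.aleph0_le ha hb)

theorem Ordinal.nfp_fp_of_map_iSup_le {f : Ordinal.{u} → Ordinal.{u}} (hf : ∀ a, a ≤ f a)
    (hcont : ∀ s : ℕ → Ordinal.{u}, f (⨆ n, s n) ≤ ⨆ n, f (s n)) (a : Ordinal.{u}) :
    f (nfp f a) = nfp f a := by
  refine le_antisymm ?_ (hf _)
  rw [← iSup_iterate_eq_nfp]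
  refine (hcont _).trans (Ordinal.iSup_le fun n => ?_)
  rw [← Function.iterate_succ_apply' f n a]
  exact Ordinal.le_iSup (fun n => f^[n] a) (n + 1)

theorem Ordinal.card_le_mk_of_Iio_subset_range {β : Type} {f : β → Ordinal.{0}} {o : Ordinal.{0}}
    (h : Iio o ⊆ range f) : o.card ≤ #β := by
  have hf := Cardinal.mk_range_le_lift (f := f)
  rw [Cardinal.lift_uzero] at hf
  have := (Cardinal.mk_le_mk_of_subset h).trans hf
  rwa [Cardinal.mk_Iio_ordinal, Cardinal.lift_le] at this

section OrdVal

variable {κ : Cardinal.{0}}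

theorem ordVal_lt_ord (x : κ.ord.ToType) : ordVal κ x < κ.ord :=
  (ToType.mk.symm x).2

theorem ordVal_strictMono : StrictMono (ordVal κ) :=
  fun _ _ h => ToType.mk.symm.strictMono h

theorem ordVal_min (x y : κ.ord.ToType) : ordVal κ (min x y) = min (ordVal κ x) (ordVal κ y) :=
  ordVal_strictMono.monotone.map_min

theorem ordVal_mk {o : Ordinal.{0}} (h : o < κ.ord) : ordVal κ (ToType.mk ⟨o, h⟩) = o := by
  simp [ordVal]

theorem mk_setOf_ordVal_lt_le (o : Ordinal.{0}) :
    #{x : κ.ord.ToType | ordVal κ x < o} ≤ o.card := by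
  rw [← Cardinal.mk_toType o]
  refine Cardinal.mk_le_of_injective (f := fun x => ToType.mk ⟨ordVal κ x.1, x.2⟩) ?_
  intro x y hxy
  have := congrArg Subtype.val ((ToType.mk (o := o)).injective hxy)
  exact Subtype.ext (ordVal_strictMono.injective this)

theorem mk_Iic_lt (hκ : ℵ₀ ≤ κ) (y : κ.ord.ToType) : #(Iic y) < κ := by
  have hsucc : Order.succ (ordVal κ y) < κ.ord := (isSuccLimit_ord hκ).succ_lt (ordVal_lt_ord y)
  refine (Cardinal.mk_le_mk_of_subset fun x (hx : x ≤ y) => ?_).trans_lt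
    ((mk_setOf_ordVal_lt_le _).trans_lt (lt_ord.1 hsucc))
  exact Order.lt_succ_of_le (ordVal_strictMono.monotone hx)

end OrdVal

section CompleteUltrafilter

variable {ι : Type} {X : Ultrafilter ι} {κ : Cardinal.{0}}

theorem UltraComplete.cardinalInterFilter (h : UltraComplete X κ) :
    CardinalInterFilter (X : Filter ι) κ :=
  ⟨h⟩

theorem Ultrafilter.eventually_iff_of_iff_eventually {p : Prop} {q : ι → Prop}
    (h : p ↔ ∀ᶠ i in X, q i) : ∀ᶠ i in X, (p ↔ q i) := by
  by_cases hp : p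
  · exact (h.1 hp).mono fun i hi => iff_of_true hp hi
  · exact (Ultrafilter.eventually_not.2 (mt h.2 hp)).mono fun i hi => iff_of_false hp hi

variable [CardinalInterFilter (X : Filter ι) κ]

theorem Ultrafilter.exists_eventually_of_eventually_exists {ι' : Type} (hι' : #ι' < κ)
    {p : ι → ι' → Prop} (h : ∀ᶠ i in X, ∃ j, p i j) : ∃ j, ∀ᶠ i in X, p i j := by
  by_contra! hne
  have hall : ∀ᶠ i in X, ∀ j, ¬p i j := (eventually_cardinal_forall hι').2 hne
  obtain ⟨i, ⟨j, hj⟩, hi⟩ := (h.and hall).exists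
  exact hi j hj

theorem NonPrincipal.notMem_of_mk_lt (hX : NonPrincipal X) {A : Set ι} (hA : #A < κ) :
    A ∉ X := fun hAX =>
  have ⟨a, ha⟩ := Ultrafilter.exists_eventually_of_eventually_exists (X := X) hA
    (p := fun i (a : A) => i = a) (mem_of_superset hAX fun i hi => ⟨⟨i, hi⟩, rfl⟩)
  hX a ha

theorem NonPrincipal.two_power_lt_mk (hX : NonPrincipal X) {μ : Cardinal.{0}} (hμ : μ < κ) :
    2 ^ μ < #ι := by
  by_contra! h
  induction μ using Cardinal.inductionOn with | _ L
  rw [← Cardinal.mk_set] at h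
  obtain ⟨f⟩ := h
  -- by `κ`-completeness, almost every `f i` agrees with the majority set `S` at all points at once
  let S : Set L := {l | ∀ᶠ i in X, l ∈ f i}
  have hS : ∀ᶠ i in X, f i = S := by
    have := (eventually_cardinal_forall hμ).2 fun l =>
      Ultrafilter.eventually_iff_of_iff_eventually (X := X) (p := l ∈ S) Iff.rfl
    exact this.mono fun i hi => Set.ext fun l => (hi l).symm
  obtain ⟨i₀, hi₀⟩ := hS.exists
  exact hX i₀ (mem_of_superset hS fun i hi => f.injective (hi.trans hi₀.symm))

end CompleteUltrafilter

section MeasurableCardinal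

variable {κ : Cardinal.{0}} {X : Ultrafilter κ.ord.ToType}

theorem NonPrincipal.isInaccessible [CardinalInterFilter (X : Filter κ.ord.ToType) κ]
    (hX : NonPrincipal X) (hκ : ℵ₀ < κ) : IsInaccessible κ := by
  have hmk : #κ.ord.ToType = κ := by simp
  refine ⟨hκ, ?_, fun μ hμ => hmk ▸ hX.two_power_lt_mk hμ⟩
  rw [← cof_toType, Order.le_cof_iff]
  intro s hs
  by_contra! hsκ
  obtain ⟨y, hy⟩ := Ultrafilter.exists_eventually_of_eventually_exists (X := X) hsκ
    (p := fun x (y : s) => x ≤ y) (Eventually.of_forall fun x => by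
      obtain ⟨y, hy, hxy⟩ := hs x
      exact ⟨⟨y, hy⟩, hxy⟩)
  exact hX.notMem_of_mk_lt (mk_Iic_lt hκ.le y) hy

end MeasurableCardinal

namespace IsUltrapowerRank

section General

variable {ι : Type} {X : Ultrafilter ι} {r : (ι → Ordinal.{0}) → Ordinal.{0}}
  {f g : ι → Ordinal.{0}}

theorem lt_iff (hr : IsUltrapowerRank X r) : r f < r g ↔ ∀ᶠ i in X, f i < g i :=
  hr.1 f g

theorem le_iff (hr : IsUltrapowerRank X r) : r f ≤ r g ↔ ∀ᶠ i in X, f i ≤ g i := by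
  simp only [← not_lt, hr.lt_iff, Ultrafilter.eventually_not]

theorem eq_iff (hr : IsUltrapowerRank X r) : r f = r g ↔ ∀ᶠ i in X, f i = g i := by
  simp only [le_antisymm_iff, hr.le_iff, eventually_and]

theorem exists_eq_of_lt (hr : IsUltrapowerRank X r) {β : Ordinal.{0}} (hβ : β < r f) :
    ∃ g, r g = β ∧ ∀ᶠ i in X, g i < f i := by
  obtain ⟨g, rfl⟩ := hr.2 f β hβ
  exact ⟨g, rfl, hr.lt_iff.1 hβ⟩

theorem exists_eq_forall_lt (hr : IsUltrapowerRank X r) {ξ β : Ordinal.{0}}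
    (hβ : β < r fun _ => ξ) : ∃ g, r g = β ∧ ∀ i, g i < ξ := by
  obtain ⟨g, rfl, hg⟩ := hr.exists_eq_of_lt hβ
  obtain ⟨i₀, hi₀⟩ := hg.exists
  refine ⟨fun i => if g i < ξ then g i else g i₀, hr.eq_iff.2 (hg.mono fun i hi => if_pos hi),
    fun i => ?_⟩
  dsimp only
  split_ifs with h
  exacts [h, hi₀]

theorem map_min (hr : IsUltrapowerRank X r) (f g : ι → Ordinal.{0}) :
    r (fun i => min (f i) (g i)) = min (r f) (r g) := by
  rcases le_total (r f) (r g) with h | h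
  · rw [min_eq_left h, hr.eq_iff]
    exact (hr.le_iff.1 h).mono fun i hi => min_eq_left hi
  · rw [min_eq_right h, hr.eq_iff]
    exact (hr.le_iff.1 h).mono fun i hi => min_eq_right hi

theorem strictMono_const (hr : IsUltrapowerRank X r) :
    StrictMono fun ξ : Ordinal.{0} => r fun _ => ξ :=
  fun _ _ h => hr.lt_iff.2 (Eventually.of_forall fun _ => h)

theorem card_const_le (hr : IsUltrapowerRank X r) (ξ : Ordinal.{0}) :
    (r fun _ => ξ).card ≤ ξ.card ^ #ι := by
  have := card_le_mk_of_Iio_subset_range (f := fun h : ι → ξ.ToType =>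
    r fun i => ToType.mk.symm (h i)) fun γ hγ => by
      obtain ⟨g, rfl, hg⟩ := hr.exists_eq_forall_lt hγ
      exact ⟨fun i => ToType.mk ⟨g i, hg i⟩, by simp⟩
  rwa [Cardinal.mk_arrow, Cardinal.mk_toType, Cardinal.lift_id, Cardinal.lift_id] at this

theorem const_lt_succ_two_power (hr : IsUltrapowerRank X r) (hι : ℵ₀ ≤ #ι) {ξ : Ordinal.{0}}
    (hξ : ξ < (Order.succ ((2 : Cardinal.{0}) ^ #ι)).ord) :
    (r fun _ => ξ) < (Order.succ ((2 : Cardinal.{0}) ^ #ι)).ord := by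
  rw [lt_ord, Order.lt_succ_iff] at hξ ⊢
  calc (r fun _ => ξ).card ≤ ξ.card ^ #ι := hr.card_const_le ξ
    _ ≤ (2 ^ #ι) ^ #ι := power_le_power_right hξ
    _ = 2 ^ #ι := by rw [← power_mul, mul_eq_self hι]

variable {κ : Cardinal.{0}} [CardinalInterFilter (X : Filter ι) κ]

theorem const_eq_self (hr : IsUltrapowerRank X r) {ξ : Ordinal.{0}} (hξ : ξ.card < κ) :
    (r fun _ => ξ) = ξ := by
  induction ξ using WellFoundedLT.induction with | _ ξ IH
  refine le_antisymm (le_of_forall_lt fun γ hγ => ?_) hr.strictMono_const.le_apply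
  obtain ⟨g, rfl, hg⟩ := hr.exists_eq_of_lt hγ
  obtain ⟨z, hz⟩ := Ultrafilter.exists_eventually_of_eventually_exists (X := X)
    (p := fun i (z : ξ.ToType) => g i = ToType.mk.symm z) (by rwa [mk_toType])
    (hg.mono fun i hi => ⟨ToType.mk ⟨g i, hi⟩, by simp⟩)
  have hzξ : (ToType.mk.symm z : Ordinal.{0}) < ξ := (ToType.mk.symm z).2
  rw [hr.eq_iff.2 hz, IH _ hzξ ((card_le_card hzξ.le).trans_lt hξ)]
  exact hzξ

theorem const_iSup_le (hr : IsUltrapowerRank X r) {ι' : Type} (hι' : #ι' < κ)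
    (s : ι' → Ordinal.{0}) : (r fun _ => ⨆ j, s j) ≤ ⨆ j, r fun _ => s j := by
  refine le_of_forall_lt fun γ hγ => ?_
  obtain ⟨g, rfl, hg⟩ := hr.exists_eq_of_lt hγ
  obtain ⟨j, hj⟩ := Ultrafilter.exists_eventually_of_eventually_exists (X := X) hι'
    (hg.mono fun i hi => Ordinal.lt_iSup_iff.1 hi)
  exact (hr.lt_iff.2 hj).trans_le (Ordinal.le_iSup _ j)

end General

section OnKappa

variable {κ : Cardinal.{0}} {X : Ultrafilter κ.ord.ToType}
  {r : (κ.ord.ToType → Ordinal.{0}) → Ordinal.{0}}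

theorem exists_ordVal_comp_eq (hr : IsUltrapowerRank X r) {β : Ordinal.{0}}
    (hβ : β < r fun _ => κ.ord) :
    ∃ b : κ.ord.ToType → κ.ord.ToType, (r fun i => ordVal κ (b i)) = β := by
  obtain ⟨g, rfl, hg⟩ := hr.exists_eq_forall_lt hβ
  exact ⟨fun i => ToType.mk ⟨g i, hg i⟩, by simp only [ordVal_mk]⟩

theorem iSup_lt_const_ord (hr : IsUltrapowerRank X r) (hκ : κ.IsRegular) {ι' : Type}
    (hι' : #ι' < κ) {s : ι' → Ordinal.{0}} (hs : ∀ j, s j < r fun _ => κ.ord) :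
    ⨆ j, s j < r fun _ => κ.ord := by
  choose c hc using fun j => hr.exists_ordVal_comp_eq (hs j)
  let G i := ⨆ j, Order.succ (ordVal κ (c j i))
  have hG : ∀ i, G i < κ.ord := fun i => iSup_lt_of_lt_cof (by rwa [hκ.cof_ord])
    fun j => (isSuccLimit_ord hκ.aleph0_le).succ_lt (ordVal_lt_ord _)
  calc ⨆ j, s j ≤ r G := Ordinal.iSup_le fun j => by
        rw [← hc j]
        exact (hr.lt_iff.2 (Eventually.of_forall fun i =>
          (Order.lt_succ _).trans_le (Ordinal.le_iSup _ j))).le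
    _ < r fun _ => κ.ord := hr.lt_iff.2 (Eventually.of_forall hG)

variable [CardinalInterFilter (X : Filter κ.ord.ToType) κ]

theorem eventually_eq_of_lt_ord (hr : IsUltrapowerRank X r) {f : κ.ord.ToType → Ordinal.{0}}
    (hf : r f < κ.ord) : ∀ᶠ i in X, f i = r f :=
  hr.eq_iff.1 (hr.const_eq_self (lt_ord.1 hf)).symm

theorem ord_lt_const_ord (hr : IsUltrapowerRank X r) (hX : NonPrincipal X) (hκ : ℵ₀ ≤ κ) :
    κ.ord < r fun _ => κ.ord := by
  refine lt_of_le_of_lt (b := r (ordVal κ)) (le_of_forall_lt fun ξ hξ => ?_)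
    (hr.lt_iff.2 (Eventually.of_forall ordVal_lt_ord))
  have hsmall : {x | ordVal κ x < Order.succ ξ} ∉ X := hX.notMem_of_mk_lt
    ((mk_setOf_ordVal_lt_le _).trans_lt (lt_ord.1 ((isSuccLimit_ord hκ).succ_lt hξ)))
  rw [← hr.const_eq_self (lt_ord.1 hξ), hr.lt_iff]
  exact (Ultrafilter.eventually_not.2 hsmall).mono fun x hx => Order.succ_le_iff.1 (not_lt.1 hx)

theorem eventually_forall_ordVal_lt (hr : IsUltrapowerRank X r) {k : κ.ord.ToType → Ordinal.{0}}
    (hk : r k = κ.ord) {p : κ.ord.ToType → κ.ord.ToType → Prop} (hp : ∀ x, ∀ᶠ i in X, p x i) :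
    ∀ᶠ i in X, ∀ x, ordVal κ x < k i → p x i := by
  by_contra! h
  have : Nonempty κ.ord.ToType := ⟨h.exists.choose⟩
  -- witnesses `c i` below `k i` represent an ordinal below `κ`, so they are a.e. constant
  let c i := Classical.epsilon fun x => ordVal κ x < k i ∧ ¬p x i
  have hc : ∀ᶠ i in X, ordVal κ (c i) < k i ∧ ¬p (c i) i :=
    h.mono fun i hi => Classical.epsilon_spec hi
  have hlt : (r fun i => ordVal κ (c i)) < κ.ord :=
    (hr.lt_iff.2 (hc.mono fun i hi => hi.1)).trans_eq hk
  obtain ⟨i, hci, hi, hpi⟩ := ((hr.eventually_eq_of_lt_ord hlt).and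
    (hc.and (hp (ToType.mk ⟨_, hlt⟩)))).exists
  rw [← ordVal_mk hlt] at hci
  rw [← ordVal_strictMono.injective hci] at hpi
  exact hi.2 hpi

end OnKappa

end IsUltrapowerRank

section AccRank

variable {α : Type} {r : α → α → Prop} {a b : α}

open Classical in
noncomputable def accRank (r : α → α → Prop) (a : α) : Ordinal.{0} :=
  if h : Acc r a then h.rank else 0

theorem accRank_of_acc (h : Acc r a) : accRank r a = h.rank :=
  dif_pos h

theorem accRank_lt (ha : Acc r a) (hba : r b a) : accRank r b < accRank r a := by
  rw [accRank_of_acc ha, accRank_of_acc (ha.inv hba)]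
  exact ha.rank_lt_of_rel hba

theorem accRank_le_of_forall_rel (hb : Acc r b) (h : ∀ z, r z a → r z b) :
    accRank r a ≤ accRank r b := by
  have ha : Acc r a := .intro a fun z hz => hb.inv (h z hz)
  rw [accRank_of_acc ha, ha.rank_eq]
  exact Ordinal.iSup_le fun z => Order.succ_le_of_lt
    ((accRank_of_acc _).symm.trans_lt (accRank_lt hb (h _ z.2)))

theorem accRank_congr (h : ∀ z, r z a ↔ r z b) : accRank r a = accRank r b := by
  by_cases hb : Acc r b
  · have ha : Acc r a := .intro a fun z hz => hb.inv ((h z).1 hz)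
    exact le_antisymm (accRank_le_of_forall_rel hb fun z => (h z).1)
      (accRank_le_of_forall_rel ha fun z => (h z).2)
  · have ha : ¬Acc r a := fun ha => hb (.intro b fun z hz => ha.inv ((h z).2 hz))
    simp only [accRank, dif_neg ha, dif_neg hb]

theorem card_accRank_le {τ : Type} (θ : α → τ) (hθ : ∀ a b, θ a = θ b → ∀ z, r z a ↔ r z b)
    (a : α) : (accRank r a).card ≤ #τ := by
  by_cases ha : Acc r a
  · have : Nonempty α := ⟨a⟩
    refine card_le_mk_of_Iio_subset_range (f := fun t => accRank r (Function.invFun θ t))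
      fun γ hγ => ?_
    obtain ⟨b, hb, rfl⟩ := ha.mem_range_rank_of_le ((accRank_of_acc ha).symm ▸ hγ).le
    exact ⟨θ b, (accRank_congr (hθ _ _ (Function.invFun_eq ⟨b, rfl⟩))).trans (accRank_of_acc hb)⟩
  · simp [accRank, dif_neg ha]

end AccRank

section ReducedRel

variable {ι α : Type} {W : Ultrafilter ι} {R : ι → α → α → Prop}

def ReducedRel (W : Ultrafilter ι) (R : ι → α → α → Prop) (Q P : ι → α) : Prop :=
  ∀ᶠ i in W, R i (Q i) (P i)

theorem ReducedRel.eventually_acc (hwf : WellFounded (ReducedRel W R)) (P : ι → α) :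
    ∀ᶠ i in W, Acc (R i) (P i) := by
  classical
  induction P using hwf.induction with | _ P IH
  by_contra hP
  let Q i := if h : ∃ z, R i z (P i) ∧ ¬Acc (R i) z then h.choose else P i
  have hQ : ∀ᶠ i in W, R i (Q i) (P i) ∧ ¬Acc (R i) (Q i) :=
    (Ultrafilter.eventually_not.2 hP).mono fun i hi => by
      have h : ∃ z, R i z (P i) ∧ ¬Acc (R i) z := by
        by_contra! h
        exact hi (.intro _ h)
      simpa only [Q, dif_pos h] using h.choose_spec
  obtain ⟨i, hQi, hacc⟩ := (hQ.and (IH Q (hQ.mono fun _ h => h.1))).exists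
  exact hQi.2 hacc

theorem le_rank_accRank {r : (ι → Ordinal.{0}) → Ordinal.{0}} (hr : IsUltrapowerRank W r)
    {f : (ι → α) → Ordinal.{0}} (hf : ∀ Q P, ReducedRel W R Q P → f Q < f P)
    (hdense : ∀ P, ∀ γ < f P, ∃ Q, ReducedRel W R Q P ∧ γ ≤ f Q) (P : ι → α) :
    f P ≤ r fun i => accRank (R i) (P i) := by
  have hwf : WellFounded (ReducedRel W R) :=
    Subrelation.wf (hf _ _) (InvImage.wf f wellFounded_lt)
  induction P using hwf.induction with | _ P IH
  refine le_of_forall_lt fun γ hγ => ?_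
  obtain ⟨Q, hQP, hγQ⟩ := hdense P γ hγ
  calc γ ≤ f Q := hγQ
    _ ≤ r fun i => accRank (R i) (Q i) := IH Q hQP
    _ < r fun i => accRank (R i) (P i) :=
      hr.lt_iff.2 ((hQP.and (ReducedRel.eventually_acc hwf P)).mono fun _ hi =>
        accRank_lt hi.2 hi.1)

end ReducedRel

namespace MitchellOrder

variable {κ : Cardinal.{0}} {U W : Ultrafilter κ.ord.ToType}
  {rU rW : (κ.ord.ToType → Ordinal.{0}) → Ordinal.{0}}
  {k : κ.ord.ToType → Ordinal.{0}} {F : κ.ord.ToType → Set (Set κ.ord.ToType)}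

def Represents (W : Ultrafilter κ.ord.ToType) (k : κ.ord.ToType → Ordinal.{0})
    (F : κ.ord.ToType → Set (Set κ.ord.ToType)) (U : Ultrafilter κ.ord.ToType) : Prop :=
  ∀ A, A ∈ U ↔ {i | {x | x ∈ A ∧ ordVal κ x < k i} ∈ F i} ∈ W

theorem mem_iff_eventually_of_forall_eventually [CardinalInterFilter (W : Filter κ.ord.ToType) κ]
    (hrW : IsUltrapowerRank W rW) (hk : rW k = κ.ord)
    (hF : Represents W k F U)
    {A : Set κ.ord.ToType} {S : κ.ord.ToType → Set κ.ord.ToType}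
    (hS : ∀ x, ∀ᶠ i in W, (x ∈ A ↔ x ∈ S i)) :
    A ∈ U ↔ ∀ᶠ i in W, {x | x ∈ S i ∧ ordVal κ x < k i} ∈ F i := by
  rw [hF]
  refine eventually_congr ((hrW.eventually_forall_ordVal_lt hk hS).mono fun i hi => ?_)
  rw [show {x | x ∈ A ∧ ordVal κ x < k i} = {x | x ∈ S i ∧ ordVal κ x < k i} from
    Set.ext fun x => ⟨fun h => ⟨(hi x h.2).1 h.1, h.2⟩, fun h => ⟨(hi x h.2).2 h.1, h.2⟩⟩]

/-- With `β = [ordVal ∘ b]_W`, the relations `LocalLT k F b i` are the coordinates of the order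
of `(β + 1)^κ / U` as computed in `M_W`; a family `P` of coordinates stands for the function
`cappedRank rW b P : x ↦ min [i ↦ P i x]_W β`. The cap at `b i` leaves fewer than `κ` local
functions below `k i`. -/
def LocalLT (k : κ.ord.ToType → Ordinal.{0}) (F : κ.ord.ToType → Set (Set κ.ord.ToType))
    (b : κ.ord.ToType → κ.ord.ToType) (i : κ.ord.ToType) (q p : κ.ord.ToType → κ.ord.ToType) :
    Prop :=
  {x | min (q x) (b i) < min (p x) (b i) ∧ ordVal κ x < k i} ∈ F i

noncomputable def cappedRank (rW : (κ.ord.ToType → Ordinal.{0}) → Ordinal.{0})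
    (b : κ.ord.ToType → κ.ord.ToType) (P : κ.ord.ToType → κ.ord.ToType → κ.ord.ToType)
    (x : κ.ord.ToType) : Ordinal.{0} :=
  rW fun i => ordVal κ (min (P i x) (b i))

theorem cappedRank_eq_min (hrW : IsUltrapowerRank W rW) (b : κ.ord.ToType → κ.ord.ToType)
    (P : κ.ord.ToType → κ.ord.ToType → κ.ord.ToType) (x : κ.ord.ToType) :
    cappedRank rW b P x = min (rW fun i => ordVal κ (P i x)) (rW fun i => ordVal κ (b i)) := by
  simp only [cappedRank, ordVal_min]
  exact hrW.map_min _ _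

theorem cappedRank_lt_mem_iff [CardinalInterFilter (W : Filter κ.ord.ToType) κ]
    (hrW : IsUltrapowerRank W rW) (hk : rW k = κ.ord)
    (hF : Represents W k F U)
    (b : κ.ord.ToType → κ.ord.ToType) (Q P : κ.ord.ToType → κ.ord.ToType → κ.ord.ToType) :
    {x | cappedRank rW b Q x < cappedRank rW b P x} ∈ U ↔ ReducedRel W (LocalLT k F b) Q P :=
  mem_iff_eventually_of_forall_eventually hrW hk hF
    (S := fun i => {x | min (Q i x) (b i) < min (P i x) (b i)}) fun _ =>
    Ultrafilter.eventually_iff_of_iff_eventually <| by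
      simp only [cappedRank, hrW.lt_iff, ordVal_strictMono.lt_iff_lt]; rfl

theorem accRank_localLT_lt_ord (hκ : IsStrongLimit κ) {b : κ.ord.ToType → κ.ord.ToType}
    {i : κ.ord.ToType} (hki : k i < κ.ord) (q : κ.ord.ToType → κ.ord.ToType) :
    accRank (LocalLT k F b i) q < κ.ord := by
  rw [lt_ord]
  refine (card_accRank_le (τ := {x | ordVal κ x < k i} → Iic (b i))
    (fun q x => ⟨min (q x.1) (b i), mem_Iic.2 (min_le_right _ _)⟩) (fun p p' hpp' z => ?_)
    q).trans_lt ?_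
  · have hp : ∀ x, ordVal κ x < k i → min (p x) (b i) = min (p' x) (b i) :=
      fun x hx => congrArg Subtype.val (congrFun hpp' ⟨x, hx⟩)
    unfold LocalLT
    rw [show {x | min (z x) (b i) < min (p x) (b i) ∧ ordVal κ x < k i} =
        {x | min (z x) (b i) < min (p' x) (b i) ∧ ordVal κ x < k i} from
      Set.ext fun x => and_congr_left fun hx => by rw [hp x hx]]
  · rw [Cardinal.mk_arrow, Cardinal.lift_id, Cardinal.lift_id]
    exact hκ.power_lt (mk_Iic_lt hκ.aleph0_le (b i))
      ((mk_setOf_ordVal_lt_le _).trans_lt (lt_ord.1 hki))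

theorem exists_reducedRel_and_rank_eq [CardinalInterFilter (W : Filter κ.ord.ToType) κ]
    (hrU : IsUltrapowerRank U rU) (hrW : IsUltrapowerRank W rW) (hk : rW k = κ.ord)
    (hF : Represents W k F U)
    {b : κ.ord.ToType → κ.ord.ToType} (hb : (rW fun i => ordVal κ (b i)) < rW fun _ => κ.ord)
    (P : κ.ord.ToType → κ.ord.ToType → κ.ord.ToType) {γ : Ordinal.{0}}
    (hγ : γ < rU (cappedRank rW b P)) :
    ∃ Q, ReducedRel W (LocalLT k F b) Q P ∧ rU (cappedRank rW b Q) = γ := by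
  obtain ⟨g, rfl, hg⟩ := hrU.exists_eq_of_lt hγ
  set β := rW fun i => ordVal κ (b i)
  choose c hc using fun x => hrW.exists_ordVal_comp_eq ((min_le_right (g x) β).trans_lt hb)
  let Q i x := c x i
  have hQ : ∀ᶠ x in U, cappedRank rW b Q x = g x := hg.mono fun x hx => by
    have hgβ : g x ≤ β := hx.le.trans ((cappedRank_eq_min hrW b P x).trans_le (min_le_right _ _))
    rw [cappedRank_eq_min hrW, hc, min_eq_left hgβ, min_eq_left hgβ]
  refine ⟨Q, (cappedRank_lt_mem_iff hrW hk hF b Q P).1 ?_, hrU.eq_iff.2 hQ⟩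
  filter_upwards [hQ, hg] with x hQx hgx
  exact hQx ▸ hgx

theorem const_lt_const_ord [CardinalInterFilter (W : Filter κ.ord.ToType) κ]
    (hrU : IsUltrapowerRank U rU) (hrW : IsUltrapowerRank W rW) (hW : NonPrincipal W)
    (hκ : IsInaccessible κ) (hk : rW k = κ.ord)
    (hF : Represents W k F U)
    {β : Ordinal.{0}} (hβ : β < rW fun _ => κ.ord) : (rU fun _ => β) < rW fun _ => κ.ord := by
  obtain ⟨b, rfl⟩ := hrW.exists_ordVal_comp_eq hβ
  have hk' : ∀ᶠ i in W, k i < κ.ord :=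
    hrW.lt_iff.1 (hk.trans_lt (hrW.ord_lt_const_ord hW hκ.aleph0_lt.le))
  have hconst : cappedRank rW b (fun i _ => b i) = fun _ => rW fun i => ordVal κ (b i) :=
    funext fun x => by simp only [cappedRank, min_self]
  calc (rU fun _ => rW fun i => ordVal κ (b i)) = rU (cappedRank rW b fun i _ => b i) := by
        rw [hconst]
    _ ≤ rW fun i => accRank (LocalLT k F b i) fun _ => b i :=
      le_rank_accRank hrW
        (fun Q P hQP => hrU.lt_iff.2 ((cappedRank_lt_mem_iff hrW hk hF b Q P).2 hQP))
        (fun P γ hγ => (exists_reducedRel_and_rank_eq hrU hrW hk hF hβ P hγ).imp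
          fun _ h => ⟨h.1, h.2.ge⟩) _
    _ < rW fun _ => κ.ord :=
      hrW.lt_iff.2 (hk'.mono fun i hi => accRank_localLT_lt_ord hκ.isStrongLimit hi _)

end MitchellOrder

/-- `U ◁ W` is expressed through Łoś's theorem: `k` represents `κ` in the `W`-ultrapower and
`F` represents `U`, i.e. `A ∈ U` iff `A ∩ k i ∈ F i` for `W`-almost all `i`. -/
theorem mitchell_order_moves_fixed_point_general
    (κ : Cardinal.{0}) (U W : Ultrafilter κ.ord.ToType)
    (rU rW : (κ.ord.ToType → Ordinal.{0}) → Ordinal.{0})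
    (hκ : ℵ₀ < κ)
    (hU2 : UltraComplete U κ) (hrU : IsUltrapowerRank U rU)
    (hW1 : NonPrincipal W) (hW2 : UltraComplete W κ) (hrW : IsUltrapowerRank W rW)
    (hUW : ∃ k : κ.ord.ToType → Ordinal.{0}, rW k = κ.ord ∧
      ∃ F : κ.ord.ToType → Set (Set κ.ord.ToType),
        ∀ A : Set κ.ord.ToType,
          (A ∈ U ↔ {i | {x | x ∈ A ∧ ordVal κ x < k i} ∈ F i} ∈ W)) :
    ∃ α : Ordinal.{0}, α < (Order.succ ((2 : Cardinal.{0}) ^ κ)).ord ∧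
      rU (fun _ => α) = α ∧ α < rW (fun _ => α) := by
  obtain ⟨k, hk, F, hF⟩ := hUW
  have := hU2.cardinalInterFilter
  have := hW2.cardinalInterFilter
  have hκ' : IsInaccessible κ := hW1.isInaccessible hκ
  have hℕ : #ℕ < κ := by simpa using hκ
  have hmk : #κ.ord.ToType = κ := by simp
  let j : Ordinal.{0} → Ordinal.{0} := fun ξ => rU fun _ => ξ
  refine ⟨nfp j κ.ord, ?_, ?_, ?_⟩
  · have h2κ : ℵ₀ < 2 ^ κ := hκ.trans (cantor κ)
    refine nfp_lt_ord_of_isRegular (isRegular_succ h2κ.le) (h2κ.trans (Order.lt_succ _)).ne'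
      (fun ξ hξ => ?_) (ord_lt_ord.2 ((cantor κ).trans (Order.lt_succ _)))
    have := hrU.const_lt_succ_two_power (ξ := ξ) (by rw [hmk]; exact hκ.le)
    rw [hmk] at this
    exact this hξ
  · exact nfp_fp_of_map_iSup_le (fun _ => hrU.strictMono_const.le_apply)
      (hrU.const_iSup_le hℕ) κ.ord
  · calc nfp j κ.ord < rW fun _ => κ.ord := by
          rw [← iSup_iterate_eq_nfp]
          refine hrW.iSup_lt_const_ord hκ'.isRegular hℕ fun n => ?_
          induction n with
          | zero => exact hrW.ord_lt_const_ord hW1 hκ.le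
          | succ n ih =>
            rw [Function.iterate_succ_apply']
            exact MitchellOrder.const_lt_const_ord hrU hrW hW1 hκ' hk hF ih
      _ ≤ rW fun _ => nfp j κ.ord := hrW.strictMono_const.monotone (le_nfp j κ.ord)

/-- Proposition 3.17: with `κ`, `U`, `j` as before, let `W` be a non-principal
`κ`-complete ultrafilter on `κ` with ultrapower embedding `j_W`, and suppose
`U ◁ W`, i.e. `U ∈ M_W`.  (Membership of `U` in the ultrapower `M_W` is expressed
via Łoś's theorem: there are `k` representing the ordinal `κ` in the `W`-ultrapower
and a function `F` such that a subset `A` of `κ` belongs to `U` exactly when the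
function `i ↦ A ∩ (k i)` is `W`-almost-everywhere in `F`.)  Then there is an
ordinal `α < (2 ^ κ)⁺` with `j_W α > α = j α`. -/
theorem mitchell_order_moves_fixed_point
    (κ : Cardinal.{0}) (U W : Ultrafilter κ.ord.ToType)
    (rU rW : (κ.ord.ToType → Ordinal.{0}) → Ordinal.{0})
    (hκ : ℵ₀ < κ)
    (hU1 : NonPrincipal U) (hU2 : UltraComplete U κ) (hrU : IsUltrapowerRank U rU)
    (hW1 : NonPrincipal W) (hW2 : UltraComplete W κ) (hrW : IsUltrapowerRank W rW)
    (hUW : ∃ k : κ.ord.ToType → Ordinal.{0}, rW k = κ.ord ∧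
      ∃ F : κ.ord.ToType → Set (Set κ.ord.ToType),
        ∀ A : Set κ.ord.ToType,
          (A ∈ U ↔ {i | {x | x ∈ A ∧ ordVal κ x < k i} ∈ F i} ∈ W)) :
    ∃ α : Ordinal.{0}, α < (Order.succ ((2 : Cardinal.{0}) ^ κ)).ord ∧
      rU (fun _ => α) = α ∧ α < rW (fun _ => α) :=
  mitchell_order_moves_fixed_point_general κ U W rU rW hκ hU2 hrU hW1 hW2 hrW hUW
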